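/- Hardy inequality in two dimensions for non-radial functions: If f ∈ Ḣ¹(ℝ²) is orthogonal to radial functions, i.e. its Fourier series in the angular variable f(r,θ) = Σ_{n≠0} f_n(r) e^{inθ} has no n = 0 term, then ‖ f/|x| ‖_{L²(ℝ²)} ≤ ‖∇f‖_{L²(ℝ²)}. -/

import Mathlib

open MeasureTheory Complex Real Set
open scoped ENNReal FourierTransform ComplexConjugate

noncomputable section

abbrev Euc (n : ℕ) : Type := EuclideanSpace ℝ (Fin n)

def lam (n : ℕ) : ℝ := ((n : ℝ) - 2) / 2

def nuD (n : ℕ) (a : ℝ) (d : ℕ) : ℝ := Real.sqrt ((lam n + (d : ℝ)) ^ 2 + a)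

def d0 (n : ℕ) : ℕ := if n = 2 then 1 else 0

def laplacian {n : ℕ} (f : Euc n → ℂ) (x : Euc n) : ℂ :=
  ∑ i : Fin n,
    fderiv ℝ (fun y => fderiv ℝ f y (EuclideanSpace.single i 1)) x (EuclideanSpace.single i 1)

def IsSphericalHarmonicPoly {n : ℕ} (l : ℕ) (P : Euc n → ℂ) : Prop :=
  (∃ q : MvPolynomial (Fin n) ℝ, q.IsHomogeneous l ∧
      ∀ x : Euc n, P x = ((MvPolynomial.eval (fun i => x i) q : ℝ) : ℂ)) ∧
  ∀ x : Euc n, laplacian P x = 0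

def OrthLT {n : ℕ} (d : ℕ) (f : Euc n → ℂ) : Prop :=
  ∀ l : ℕ, l < d → ∀ P : Euc n → ℂ, IsSphericalHarmonicPoly l P →
    ∀ g : ℝ → ℂ,
      Integrable (fun x : Euc n => f x * conj (P x * g ‖x‖)) volume →
      ∫ x : Euc n, f x * conj (P x * g ‖x‖) = 0

def SpanLT {n : ℕ} (d : ℕ) (f : Euc n → ℂ) : Prop :=
  ∃ (N : ℕ) (l : Fin N → ℕ) (P : Fin N → Euc n → ℂ) (g : Fin N → ℝ → ℂ),
    (∀ i, l i < d) ∧ (∀ i, IsSphericalHarmonicPoly (l i) (P i)) ∧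
    ∀ x : Euc n, x ≠ 0 → f x = ∑ i, P i x * g i ‖x‖

def sobNorm {n : ℕ} (s : ℝ) (f : Euc n → ℂ) : ℝ≥0∞ :=
  (∫⁻ ξ : Euc n, (‖ξ‖₊ : ℝ≥0∞) ^ (2 * s) * (‖𝓕 f ξ‖₊ : ℝ≥0∞) ^ (2 : ℝ)) ^ (1/2 : ℝ)

def fracLap {n : ℕ} (s : ℝ) (f : Euc n → ℂ) : Euc n → ℂ :=
  𝓕⁻ fun ξ : Euc n => ((‖ξ‖ ^ s : ℝ) : ℂ) * 𝓕 f ξ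

def wNorm {n : ℕ} (e : ℝ) (u : ℝ → Euc n → ℂ) : ℝ≥0∞ :=
  eLpNorm (fun p : ℝ × Euc n => (‖p.2‖ ^ e : ℝ) • u p.1 p.2) 2 volume

def mixedNorm {n : ℕ} (p q : ℝ) (u : ℝ → Euc n → ℂ) : ℝ≥0∞ :=
  (∫⁻ t : ℝ, eLpNorm (u t) (ENNReal.ofReal q) volume ^ p) ^ (1 / p)

def IsSchrodingerSol {n : ℕ} (a : ℝ) (f : Euc n → ℂ) (u : ℝ → Euc n → ℂ) : Prop :=
  (∀ x, u 0 x = f x) ∧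
  ∀ (t : ℝ) (x : Euc n), x ≠ 0 →
    Complex.I * deriv (fun s => u s x) t + laplacian (u t) x
      - ((a / ‖x‖ ^ 2 : ℝ) : ℂ) * u t x = 0

def IsWaveSol {n : ℕ} (a : ℝ) (f g : Euc n → ℂ) (u : ℝ → Euc n → ℂ) : Prop :=
  (∀ x, u 0 x = f x) ∧ (∀ x, deriv (fun s => u s x) 0 = g x) ∧
  ∀ (t : ℝ) (x : Euc n), x ≠ 0 →
    -(deriv (fun s => deriv (fun s' => u s' x) s) t) + laplacian (u t) x
      - ((a / ‖x‖ ^ 2 : ℝ) : ℂ) * u t x = 0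

def besselJ (ν x : ℝ) : ℝ :=
  ∑' m : ℕ, (-1 : ℝ) ^ m / ((m.factorial : ℝ) * Real.Gamma (ν + m + 1))
      * (x / 2) ^ (2 * (m : ℝ) + ν)

def hankel (n : ℕ) (ν : ℝ) (φ : Euc n → ℂ) (ξ : Euc n) : ℂ :=
  ∫ r in Ioi (0 : ℝ),
    (((r * ‖ξ‖) ^ (-(lam n)) * besselJ ν (r * ‖ξ‖) * r ^ ((n : ℝ) - 1) : ℝ) : ℂ)
      * φ ((r / ‖ξ‖) • ξ)

def lpj {n : ℕ} (β : ℝ → ℝ) (j : ℤ) (f : Euc n → ℂ) : Euc n → ℂ :=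
  𝓕⁻ fun ξ : Euc n => ((β ((2 : ℝ) ^ (-j) * ‖ξ‖) : ℝ) : ℂ) * 𝓕 f ξ

def IsLPBump (β : ℝ → ℝ) : Prop :=
  ContDiff ℝ (⊤ : ℕ∞) β ∧ (∀ x, x ∉ Icc (1/2 : ℝ) 2 → β x = 0) ∧
  ∀ x : ℝ, 0 < x → HasSum (fun j : ℤ => β ((2 : ℝ) ^ (-j) * x) ^ 2) 1

def besovNorm {n : ℕ} (β : ℝ → ℝ) (s q : ℝ) (f : Euc n → ℂ) : ℝ≥0∞ :=
  (∑' j : ℤ, (2 : ℝ≥0∞) ^ (2 * s * (j : ℝ)) *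
      eLpNorm (lpj β j f) (ENNReal.ofReal q) volume ^ (2 : ℝ)) ^ (1/2 : ℝ)

def newton (n : ℕ) (x : Euc n) : ℝ :=
  if n = 2 then -Real.log ‖x‖ / (2 * π)
  else ‖x‖ ^ (2 - (n : ℝ)) /
    (((n : ℝ) - 2) * ((n : ℝ) * (volume (Metric.ball (0 : Euc n) 1)).toReal))


/-- The point of `ℝ²` with polar coordinates `(r, θ)`. -/
def polar (r θ : ℝ) : Euc 2 :=
  (EuclideanSpace.equiv (Fin 2) ℝ).symm ![r * Real.cos θ, r * Real.sin θ]

open AddCircle in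
lemma aux_eLpNorm_two_eq {α : Type*} [MeasurableSpace α] {E : Type*} [NormedAddCommGroup E]
    (h : α → E) (μ : Measure α) :
    eLpNorm h 2 μ = (∫⁻ x, (‖h x‖₊ : ℝ≥0∞) ^ (2:ℕ) ∂μ) ^ (1/(2:ℝ)) := by
  rw [eLpNorm_eq_lintegral_rpow_enorm_toReal (by norm_num) (by norm_num)]
  norm_num
  rfl

open AddCircle in
lemma wirtinger_circle (g g' : ℝ → ℂ)
    (hg : ∀ x, HasDerivAt g (g' x) x)
    (hper : Function.Periodic g (2 * π))
    (hmean : ∫ θ in (-π)..(-π + 2 * π), g θ = 0)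
    (hfin : ∫⁻ θ in Ioc (-π) (-π + 2 * π), (‖g' θ‖₊ : ℝ≥0∞) ^ (2:ℕ) ≠ ∞) :
    ∫⁻ θ in Ioc (-π) (-π + 2 * π), (‖g θ‖₊ : ℝ≥0∞) ^ (2:ℕ) ≤
      ∫⁻ θ in Ioc (-π) (-π + 2 * π), (‖g' θ‖₊ : ℝ≥0∞) ^ (2:ℕ) := by
  haveI hT : Fact (0 < 2 * π) := ⟨by positivity⟩
  have hgc : Continuous g := continuous_iff_continuousAt.2 fun x => (hg x).continuousAt
  have hg'eq : g' = deriv g := funext fun x => ((hg x).deriv).symm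
  have hg'm : Measurable g' := hg'eq ▸ measurable_deriv g
  set G : AddCircle (2 * π) → ℂ := liftIoc (2 * π) (-π) g with hG
  set G' : AddCircle (2 * π) → ℂ := liftIoc (2 * π) (-π) g' with hG'
  -- measurability of lifts
  have hmeaslift : ∀ (h : ℝ → ℂ), Measurable h → Measurable (liftIoc (2 * π) (-π) h) := by
    intro h hh
    have : liftIoc (2 * π) (-π) h =
        (fun y : Ioc (-π) (-π + 2 * π) => h y) ∘ (measurableEquivIoc (2 * π) (-π)) := rfl
    rw [this]
    exact (hh.comp measurable_subtype_coe).comp (measurableEquivIoc (2 * π) (-π)).measurable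
  have hGm : Measurable G := hmeaslift g hgc.measurable
  have hG'm : Measurable G' := hmeaslift g' hg'm
  -- lintegral of lift over circle vs interval
  have hlint : ∀ (h : ℝ → ℂ),
      ∫⁻ b : AddCircle (2 * π), (‖liftIoc (2 * π) (-π) h b‖₊ : ℝ≥0∞) ^ (2:ℕ) ∂haarAddCircle
      = (ENNReal.ofReal (2 * π))⁻¹ * ∫⁻ θ in Ioc (-π) (-π + 2 * π), (‖h θ‖₊ : ℝ≥0∞) ^ (2:ℕ) := by
    intro h
    have h1 : ∫⁻ θ in Ioc (-π) (-π + 2 * π),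
        (‖liftIoc (2 * π) (-π) h θ‖₊ : ℝ≥0∞) ^ (2:ℕ)
        = ∫⁻ b : AddCircle (2 * π), (‖liftIoc (2 * π) (-π) h b‖₊ : ℝ≥0∞) ^ (2:ℕ) := by
      exact AddCircle.lintegral_preimage (2 * π) (-π)
        (fun b => (‖liftIoc (2 * π) (-π) h b‖₊ : ℝ≥0∞) ^ (2:ℕ))
    have h2 : ∫⁻ θ in Ioc (-π) (-π + 2 * π),
        (‖liftIoc (2 * π) (-π) h θ‖₊ : ℝ≥0∞) ^ (2:ℕ)
        = ∫⁻ θ in Ioc (-π) (-π + 2 * π), (‖h θ‖₊ : ℝ≥0∞) ^ (2:ℕ) := by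
      refine setLIntegral_congr_fun measurableSet_Ioc (fun θ hθ => ?_)
      rw [liftIoc_coe_apply hθ]
    have h3 : (volume : Measure (AddCircle (2 * π))) =
        ENNReal.ofReal (2 * π) • haarAddCircle := AddCircle.volume_eq_smul_haarAddCircle
    rw [← h2, h1, h3, lintegral_smul_measure, smul_eq_mul, ← mul_assoc,
      ENNReal.inv_mul_cancel (ne_of_gt (ENNReal.ofReal_pos.2 (by positivity))) ENNReal.ofReal_ne_top,
      one_mul]
  -- boundedness of g on the period interval
  obtain ⟨C, hC⟩ := isCompact_Icc.exists_bound_of_continuousOn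
    (hgc.continuousOn : ContinuousOn g (Icc (-π) (-π + 2 * π)))
  have hGb : ∀ b, ‖G b‖ ≤ C := by
    intro b
    have : G b = g ((equivIoc (2 * π) (-π) b : ℝ)) := rfl
    rw [this]
    exact hC _ (Ioc_subset_Icc_self (equivIoc (2 * π) (-π) b).2)
  have hGmem : MemLp G 2 haarAddCircle :=
    MemLp.of_bound hGm.aestronglyMeasurable C (Filter.Eventually.of_forall hGb)
  have heLp : ∀ (h : AddCircle (2 * π) → ℂ) (μ : Measure (AddCircle (2 * π))),
      eLpNorm h 2 μ = (∫⁻ x, (‖h x‖₊ : ℝ≥0∞) ^ (2:ℕ) ∂μ) ^ (1/(2:ℝ)) := by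
    intro h μ
    rw [eLpNorm_eq_lintegral_rpow_enorm_toReal (by norm_num) (by norm_num)]
    norm_num
    rfl
  have hG'mem : MemLp G' 2 haarAddCircle := by
    refine ⟨hG'm.aestronglyMeasurable, ?_⟩
    rw [heLp]
    refine ENNReal.rpow_lt_top_of_nonneg (by norm_num) ?_
    rw [hlint g']
    exact ENNReal.mul_ne_top (by simp [Real.pi_pos]) hfin
  set F : Lp ℂ 2 (@haarAddCircle (2*π) hT) := hGmem.toLp G with hF
  set F' : Lp ℂ 2 (@haarAddCircle (2*π) hT) := hG'mem.toLp G' with hF'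
  have hcoF : ∀ n : ℤ, fourierCoeff (⇑F) n = fourierCoeff G n := by
    intro n
    refine integral_congr_ae ?_
    filter_upwards [hGmem.coeFn_toLp] with t ht
    rw [ht]
  have hcoF' : ∀ n : ℤ, fourierCoeff (⇑F') n = fourierCoeff G' n := by
    intro n
    refine integral_congr_ae ?_
    filter_upwards [hG'mem.coeFn_toLp] with t ht
    rw [ht]
  have hab : (-π) < -π + 2 * π := by linarith [pi_pos]
  have hcoeffG : ∀ n : ℤ, fourierCoeff G n = fourierCoeffOn hab g n := by
    intro n; exact fourierCoeff_liftIoc_eq g n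
  have hcoeffG' : ∀ n : ℤ, fourierCoeff G' n = fourierCoeffOn hab g' n := by
    intro n; exact fourierCoeff_liftIoc_eq g' n
  haveI : Fact ((volume : Measure ℝ) (Ioc (-π) (-π + 2 * π)) < ⊤) :=
    ⟨by simp [Real.volume_Ioc]; exact ENNReal.mul_lt_top (by simp) ENNReal.ofReal_lt_top⟩
  have hint : IntervalIntegrable g' volume (-π) (-π + 2 * π) := by
    rw [intervalIntegrable_iff_integrableOn_Ioc_of_le hab.le]
    have h2 : MemLp g' 2 (volume.restrict (Ioc (-π) (-π + 2 * π))) := by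
      refine ⟨hg'm.aestronglyMeasurable, ?_⟩
      rw [eLpNorm_eq_lintegral_rpow_enorm_toReal (by norm_num) (by norm_num)]
      refine ENNReal.rpow_lt_top_of_nonneg (by norm_num) ?_
      have : ∀ x : ℝ, ‖g' x‖ₑ ^ ((2:ℝ≥0∞).toReal) = (‖g' x‖₊ : ℝ≥0∞) ^ (2:ℕ) := by
        intro x; norm_num; rfl
      simp_rw [this]
      exact hfin
    exact memLp_one_iff_integrable.1 (h2.mono_exponent (by norm_num))
  have key : ∀ n : ℤ, ‖fourierCoeff (⇑F) n‖ ^ 2 ≤ ‖fourierCoeff (⇑F') n‖ ^ 2 := by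
    intro n
    rw [hcoF, hcoF', hcoeffG, hcoeffG']
    rcases eq_or_ne n 0 with rfl | hn
    · have h0 : fourierCoeffOn hab g 0 = 0 := by
        rw [fourierCoeffOn_eq_integral]
        simp only [neg_zero, fourier_zero, one_smul]
        rw [hmean, smul_zero]
      simp [h0]

    · have relation := fourierCoeffOn_of_hasDerivAt hab hn (fun x _ => hg x) hint
      have hper' : g (-π + 2 * π) = g (-π) := hper (-π)
      rw [hper', sub_self, mul_zero, zero_sub] at relation
      have hnorm : ‖fourierCoeffOn hab g n‖ = (1 / |(n:ℝ)|) * ‖fourierCoeffOn hab g' n‖ := by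
        rw [relation]
        rw [norm_mul, norm_neg, norm_mul, norm_div]
        have e1 : ‖(-2 * (π:ℂ) * I * (n:ℂ))‖ = 2 * π * |(n:ℝ)| := by
          simp [Complex.norm_intCast, abs_of_pos pi_pos]
        have e2 : ‖((-π + 2 * π : ℝ) : ℂ) - ((-π : ℝ) : ℂ)‖ = 2 * π := by
          rw [← Complex.ofReal_sub, Complex.norm_real, Real.norm_eq_abs,
            show (-π + 2 * π - -π : ℝ) = 2 * π by ring, abs_of_pos (by positivity)]
        rw [e1, e2, norm_one]
        field_simp
      rw [hnorm]
      have hn1 : (1:ℝ) ≤ |(n:ℝ)| := by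
        rw [← Int.cast_abs]
        exact_mod_cast Int.one_le_abs (by exact_mod_cast hn)
      have : (1 / |(n:ℝ)|) * ‖fourierCoeffOn hab g' n‖ ≤ ‖fourierCoeffOn hab g' n‖ := by
        rw [div_mul_eq_mul_div, one_mul]
        exact div_le_self (norm_nonneg _) hn1
      exact pow_le_pow_left₀ (by positivity) this 2
  -- summability
  have s2 : Summable (fun i : ℤ => ‖fourierCoeff (⇑F') i‖ ^ 2) := by
    have s1 := (lp.memℓp (fourierBasis.repr F')).summable
      (by norm_num : 0 < (2:ℝ≥0∞).toReal)
    have : (fun i : ℤ => ‖fourierBasis.repr F' i‖ ^ (2:ℝ≥0∞).toReal)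
        = fun i : ℤ => ‖fourierCoeff (⇑F') i‖ ^ 2 := by
      funext i
      rw [fourierBasis_repr]
      norm_num
    rwa [this] at s1
  have s3 : Summable (fun i : ℤ => ‖fourierCoeff (⇑F) i‖ ^ 2) :=
    Summable.of_nonneg_of_le (fun i => sq_nonneg _) key s2
  have main := Summable.tsum_le_tsum key s3 s2
  rw [tsum_sq_fourierCoeff F, tsum_sq_fourierCoeff F'] at main
  -- convert integrals over the circle to lintegrals
  have conv : ∀ (H : AddCircle (2 * π) → ℂ), Measurable H →
      ∫ t, ‖H t‖ ^ 2 ∂(@haarAddCircle (2*π) hT)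
        = (∫⁻ t, (‖H t‖₊ : ℝ≥0∞) ^ (2:ℕ) ∂(@haarAddCircle (2*π) hT)).toReal := by
    intro H hH
    rw [integral_eq_lintegral_of_nonneg_ae (Filter.Eventually.of_forall fun t => sq_nonneg _)
      ((hH.norm.pow_const 2).aestronglyMeasurable)]
    congr 1
    refine lintegral_congr fun t => ?_
    rw [← enorm_eq_nnnorm, ← _root_.ofReal_norm, ← ENNReal.ofReal_pow (norm_nonneg _)]
  have intF : ∫ t, ‖(⇑F : AddCircle (2*π) → ℂ) t‖ ^ 2 ∂haarAddCircle
      = ∫ t, ‖G t‖ ^ 2 ∂haarAddCircle := by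
    refine integral_congr_ae ?_
    filter_upwards [hGmem.coeFn_toLp] with t ht
    rw [ht]
  have intF' : ∫ t, ‖(⇑F' : AddCircle (2*π) → ℂ) t‖ ^ 2 ∂haarAddCircle
      = ∫ t, ‖G' t‖ ^ 2 ∂haarAddCircle := by
    refine integral_congr_ae ?_
    filter_upwards [hG'mem.coeFn_toLp] with t ht
    rw [ht]
  rw [intF, intF', conv G hGm, conv G' hG'm, hlint g, hlint g'] at main
  -- finiteness of both sides
  set A := ∫⁻ θ in Ioc (-π) (-π + 2 * π), (‖g θ‖₊ : ℝ≥0∞) ^ (2:ℕ) with hA_def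
  set B := ∫⁻ θ in Ioc (-π) (-π + 2 * π), (‖g' θ‖₊ : ℝ≥0∞) ^ (2:ℕ) with hB_def
  have hAfin : A ≠ ⊤ := by
    have hbd : ∀ θ ∈ Ioc (-π) (-π + 2 * π),
        (‖g θ‖₊ : ℝ≥0∞) ^ (2:ℕ) ≤ ENNReal.ofReal (C ^ 2) := by
      intro θ hθ
      have hCθ := hC θ (Ioc_subset_Icc_self hθ)
      calc (‖g θ‖₊ : ℝ≥0∞) ^ (2:ℕ) = ENNReal.ofReal (‖g θ‖ ^ 2) := by
            rw [ENNReal.ofReal_pow (norm_nonneg _), _root_.ofReal_norm, enorm_eq_nnnorm]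
        _ ≤ ENNReal.ofReal (C ^ 2) :=
            ENNReal.ofReal_le_ofReal (by nlinarith [norm_nonneg (g θ)])
    refine ne_of_lt (lt_of_le_of_lt (setLIntegral_mono' measurableSet_Ioc hbd) ?_)
    rw [setLIntegral_const]
    exact ENNReal.mul_lt_top ENNReal.ofReal_lt_top (Fact.out)
  have hc0 : (ENNReal.ofReal (2 * π))⁻¹ ≠ 0 := by
    simp [pi_pos, ENNReal.mul_eq_top]
  have hctop : (ENNReal.ofReal (2 * π))⁻¹ ≠ ⊤ := by
    simp [ne_of_gt (ENNReal.ofReal_pos.2 (by positivity : (0:ℝ) < 2 * π)), pi_pos]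
  have hAB : (ENNReal.ofReal (2 * π))⁻¹ * A ≤ (ENNReal.ofReal (2 * π))⁻¹ * B := by
    refine (ENNReal.toReal_le_toReal ?_ ?_).1 main
    · exact ENNReal.mul_ne_top hctop hAfin
    · exact ENNReal.mul_ne_top hctop hfin
  exact (ENNReal.mul_le_mul_iff_right hc0 hctop).1 hAB

lemma lintegral_polarCoord_symm (F : ℝ × ℝ → ℝ≥0∞) :
    ∫⁻ p, F p
      = ∫⁻ q in Set.Ioi (0:ℝ) ×ˢ Set.Ioo (-π) π,
          ENNReal.ofReal q.1 * F (q.1 * Real.cos q.2, q.1 * Real.sin q.2) := by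
  set B : ℝ × ℝ → ℝ × ℝ →L[ℝ] ℝ × ℝ := fun p =>
    LinearMap.toContinuousLinearMap (Matrix.toLin (Module.Basis.finTwoProd ℝ) (Module.Basis.finTwoProd ℝ)
      !![Real.cos p.2, -p.1 * Real.sin p.2; Real.sin p.2, p.1 * Real.cos p.2]) with hB
  have hBdet : ∀ p, (B p).det = p.1 := by
    intro p
    conv_rhs => rw [← one_mul p.1, ← Real.cos_sq_add_sin_sq p.2]
    simp only [hB, neg_mul, LinearMap.det_toContinuousLinearMap, LinearMap.det_toLin,
      Matrix.det_fin_two_of, sub_neg_eq_add]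
    ring
  have hinj : Set.InjOn polarCoord.symm polarCoord.target := by
    have := polarCoord.symm.injOn
    rwa [OpenPartialHomeomorph.symm_source] at this
  calc ∫⁻ p, F p = ∫⁻ p in polarCoord.source, F p := by
        rw [← setLIntegral_univ]
        exact (setLIntegral_congr polarCoord_source_ae_eq_univ.symm)
    _ = ∫⁻ p in polarCoord.symm '' polarCoord.target, F p := by
        rw [OpenPartialHomeomorph.symm_image_target_eq_source]
    _ = ∫⁻ q in polarCoord.target,
          ENNReal.ofReal |(B q).det| * F (polarCoord.symm q) := by
        exact lintegral_image_eq_lintegral_abs_det_fderiv_mul volume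
          polarCoord.open_target.measurableSet
          (fun q _ => (hasFDerivAt_polarCoord_symm q).hasFDerivWithinAt) hinj F
    _ = ∫⁻ q in Set.Ioi (0:ℝ) ×ˢ Set.Ioo (-π) π,
          ENNReal.ofReal q.1 * F (q.1 * Real.cos q.2, q.1 * Real.sin q.2) := by
        rw [show polarCoord.target = Set.Ioi (0:ℝ) ×ˢ Set.Ioo (-π) π from rfl]
        refine setLIntegral_congr_fun (isOpen_Ioi.prod isOpen_Ioo).measurableSet
          (fun q hq => ?_)
        rw [hBdet, abs_of_pos hq.1]
        rfl

def E2 : Euc 2 ≃ᵐ ℝ × ℝ :=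
  (MeasurableEquiv.toLp 2 (Fin 2 → ℝ)).symm.trans (MeasurableEquiv.finTwoArrow)

lemma E2_mp : MeasurePreserving E2 volume volume :=
  (volume_preserving_finTwoArrow ℝ).comp (EuclideanSpace.volume_preserving_symm_measurableEquiv_toLp (Fin 2))

lemma E2_symm_apply (a b : ℝ) :
    E2.symm (a, b) = (EuclideanSpace.equiv (Fin 2) ℝ).symm ![a, b] := by
  rfl

lemma polar_apply (r θ : ℝ) (i : Fin 2) :
    polar r θ i = ![r * Real.cos θ, r * Real.sin θ] i := rfl

lemma norm_polar (r θ : ℝ) (hr : 0 ≤ r) : ‖polar r θ‖ = r := by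
  rw [EuclideanSpace.norm_eq]
  simp [polar_apply, Fin.sum_univ_two]
  rw [show (r * Real.cos θ) ^ 2 + (r * Real.sin θ) ^ 2
      = r ^ 2 * ((Real.cos θ)^2 + (Real.sin θ)^2) by ring, Real.cos_sq_add_sin_sq, mul_one,
    Real.sqrt_sq hr]



def tangent (r θ : ℝ) : Euc 2 :=
  (EuclideanSpace.equiv (Fin 2) ℝ).symm ![-(r * Real.sin θ), r * Real.cos θ]

lemma norm_tangent (r θ : ℝ) (hr : 0 ≤ r) : ‖tangent r θ‖ = r := by
  rw [EuclideanSpace.norm_eq]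
  simp only [tangent]
  have : ∀ i : Fin 2, ((EuclideanSpace.equiv (Fin 2) ℝ).symm
      ![-(r * Real.sin θ), r * Real.cos θ]) i = ![-(r * Real.sin θ), r * Real.cos θ] i :=
    fun i => rfl
  simp only [this, Fin.sum_univ_two]
  simp only [Matrix.cons_val_zero, Matrix.cons_val_one, Matrix.head_cons, Real.norm_eq_abs,
    sq_abs]
  rw [show (-(r * Real.sin θ)) ^ 2 + (r * Real.cos θ) ^ 2
      = r ^ 2 * ((Real.sin θ)^2 + (Real.cos θ)^2) by ring, Real.sin_sq_add_cos_sq, mul_one,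
    Real.sqrt_sq hr]

lemma hasDerivAt_polar (r θ : ℝ) : HasDerivAt (fun t => polar r t) (tangent r θ) θ := by
  have hL := ((EuclideanSpace.equiv (Fin 2) ℝ).symm : (Fin 2 → ℝ) ≃L[ℝ] Euc 2).hasFDerivAt
    (x := ![r * Real.cos θ, r * Real.sin θ])
  have hc : HasDerivAt (fun t => ![r * Real.cos t, r * Real.sin t] : ℝ → (Fin 2 → ℝ))
      (![-(r * Real.sin θ), r * Real.cos θ]) θ := by
    rw [hasDerivAt_pi]
    intro i
    fin_cases i
    · simpa using ((Real.hasDerivAt_cos θ).const_mul r)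
    · simpa [mul_comm] using ((Real.hasDerivAt_sin θ).const_mul r)
  have := hL.comp_hasDerivAt θ hc
  exact this

lemma lintegral_euc_polar (Φ : Euc 2 → ℝ≥0∞) (hΦ : Measurable Φ) :
    ∫⁻ x, Φ x
      = ∫⁻ r in Set.Ioi (0:ℝ), ∫⁻ θ in Set.Ioo (-π) π,
          ENNReal.ofReal r * Φ (polar r θ) := by
  have h1 : ∫⁻ p : ℝ × ℝ, Φ (E2.symm p) = ∫⁻ x, Φ x :=
    (E2_mp.symm E2).lintegral_comp hΦ
  rw [← h1, lintegral_polarCoord_symm]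
  have h2 : ∀ q : ℝ × ℝ, E2.symm (q.1 * Real.cos q.2, q.1 * Real.sin q.2) = polar q.1 q.2 :=
    fun q => rfl
  simp_rw [h2]
  have hpm : Measurable fun q : ℝ × ℝ => polar q.1 q.2 := by
    have : (fun q : ℝ × ℝ => polar q.1 q.2)
        = fun q => E2.symm (q.1 * Real.cos q.2, q.1 * Real.sin q.2) := rfl
    rw [this]
    exact E2.symm.measurable.comp
      ((measurable_fst.mul (Real.continuous_cos.measurable.comp measurable_snd)).prodMk
        (measurable_fst.mul (Real.continuous_sin.measurable.comp measurable_snd)))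
  have hmeas : Measurable fun q : ℝ × ℝ => ENNReal.ofReal q.1 * Φ (polar q.1 q.2) :=
    (ENNReal.measurable_ofReal.comp measurable_fst).mul (hΦ.comp hpm)
  have hres : (volume : Measure (ℝ × ℝ)).restrict (Set.Ioi (0:ℝ) ×ˢ Set.Ioo (-π) π)
      = (volume.restrict (Set.Ioi (0:ℝ))).prod (volume.restrict (Set.Ioo (-π) π)) := by
    rw [Measure.volume_eq_prod, Measure.prod_restrict]
  rw [hres, lintegral_prod _ hmeas.aemeasurable]


lemma slice_ineq (f : Euc 2 → ℂ) (hdiff : Differentiable ℝ f) (r : ℝ) (hr : 0 < r)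
    (hmean : ∫ θ in (0:ℝ)..(2 * π), f (polar r θ) = 0) :
    ∫⁻ θ in Ioo (-π) π,
        ENNReal.ofReal r * (‖(‖polar r θ‖⁻¹ : ℝ) • f (polar r θ)‖₊ : ℝ≥0∞) ^ (2:ℕ)
      ≤ ∫⁻ θ in Ioo (-π) π,
        ENNReal.ofReal r * (‖fderiv ℝ f (polar r θ)‖₊ : ℝ≥0∞) ^ (2:ℕ) := by
  have hππ : -π + 2 * π = π := by ring
  have hset : (volume : Measure ℝ).restrict (Ioo (-π) π)
      = volume.restrict (Ioc (-π) (-π + 2 * π)) := by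
    rw [hππ]; exact Measure.restrict_congr_set Ioo_ae_eq_Ioc
  rw [hset]
  have hpt1 : ∀ θ : ℝ,
      ENNReal.ofReal r * (‖(‖polar r θ‖⁻¹ : ℝ) • f (polar r θ)‖₊ : ℝ≥0∞) ^ (2:ℕ)
        = ENNReal.ofReal r⁻¹ * (‖f (polar r θ)‖₊ : ℝ≥0∞) ^ (2:ℕ) := by
    intro θ
    rw [norm_polar r θ hr.le, nnnorm_smul, ENNReal.coe_mul, mul_pow, ← mul_assoc]
    congr 1
    have h1 : ((‖(r⁻¹ : ℝ)‖₊ : ℝ≥0∞)) = ENNReal.ofReal r⁻¹ := by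
      rw [← enorm_eq_nnnorm, ← _root_.ofReal_norm, Real.norm_eq_abs, abs_of_pos (by positivity)]
    rw [h1, ← ENNReal.ofReal_pow (by positivity), ← ENNReal.ofReal_mul hr.le]
    rw [show r * (r⁻¹)^2 = r⁻¹ by field_simp [hr.ne']]
  simp_rw [hpt1]
  rw [lintegral_const_mul' _ _ ENNReal.ofReal_ne_top,
    lintegral_const_mul' _ _ ENNReal.ofReal_ne_top]
  set A := ∫⁻ θ in Ioc (-π) (-π + 2 * π), (‖f (polar r θ)‖₊ : ℝ≥0∞) ^ (2:ℕ) with hA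
  set B := ∫⁻ θ in Ioc (-π) (-π + 2 * π), (‖fderiv ℝ f (polar r θ)‖₊ : ℝ≥0∞) ^ (2:ℕ) with hB
  by_cases hBtop : B = ⊤
  · rw [hBtop, ENNReal.mul_top (by simp [hr] : ENNReal.ofReal r ≠ 0)]
    exact le_top
  · set g : ℝ → ℂ := fun θ => f (polar r θ) with hg
    set g' : ℝ → ℂ := fun θ => fderiv ℝ f (polar r θ) (tangent r θ) with hg'
    have hgD : ∀ θ, HasDerivAt g (g' θ) θ := fun θ =>
      (hdiff (polar r θ)).hasFDerivAt.comp_hasDerivAt θ (hasDerivAt_polar r θ)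
    have hper : Function.Periodic g (2 * π) := by
      intro θ
      have : polar r (θ + 2 * π) = polar r θ := by
        simp [polar, Real.cos_add_two_pi, Real.sin_add_two_pi]
      simp only [hg, this]
    have hmean' : ∫ θ in (-π)..(-π + 2 * π), g θ = 0 := by
      rw [hper.intervalIntegral_add_eq (-π) 0, zero_add]
      exact hmean
    have hbound : ∀ θ : ℝ, (‖g' θ‖₊ : ℝ≥0∞) ^ (2:ℕ)
        ≤ ENNReal.ofReal (r ^ 2) * (‖fderiv ℝ f (polar r θ)‖₊ : ℝ≥0∞) ^ (2:ℕ) := by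
      intro θ
      have h1 : ‖g' θ‖ ≤ ‖fderiv ℝ f (polar r θ)‖ * r := by
        simpa [norm_tangent r θ hr.le] using (fderiv ℝ f (polar r θ)).le_opNorm (tangent r θ)
      calc (‖g' θ‖₊ : ℝ≥0∞) ^ (2:ℕ) = ENNReal.ofReal (‖g' θ‖ ^ 2) := by
            rw [ENNReal.ofReal_pow (norm_nonneg _), _root_.ofReal_norm, enorm_eq_nnnorm]
        _ ≤ ENNReal.ofReal ((‖fderiv ℝ f (polar r θ)‖ * r) ^ 2) :=
            ENNReal.ofReal_le_ofReal (pow_le_pow_left₀ (norm_nonneg _) h1 2)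
        _ = ENNReal.ofReal (r ^ 2) * ENNReal.ofReal (‖fderiv ℝ f (polar r θ)‖ ^ 2) := by
            rw [← ENNReal.ofReal_mul (by positivity)]
            congr 1
            ring
        _ = ENNReal.ofReal (r ^ 2) * (‖fderiv ℝ f (polar r θ)‖₊ : ℝ≥0∞) ^ (2:ℕ) := by
            rw [ENNReal.ofReal_pow (norm_nonneg _), _root_.ofReal_norm, enorm_eq_nnnorm]
    have hfin' : ∫⁻ θ in Ioc (-π) (-π + 2 * π), (‖g' θ‖₊ : ℝ≥0∞) ^ (2:ℕ)
        ≤ ENNReal.ofReal (r ^ 2) * B := by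
      calc ∫⁻ θ in Ioc (-π) (-π + 2 * π), (‖g' θ‖₊ : ℝ≥0∞) ^ (2:ℕ)
          ≤ ∫⁻ θ in Ioc (-π) (-π + 2 * π),
              ENNReal.ofReal (r ^ 2) * (‖fderiv ℝ f (polar r θ)‖₊ : ℝ≥0∞) ^ (2:ℕ) :=
            lintegral_mono fun θ => hbound θ
        _ = ENNReal.ofReal (r ^ 2) * B := lintegral_const_mul' _ _ ENNReal.ofReal_ne_top
    have hfin : ∫⁻ θ in Ioc (-π) (-π + 2 * π), (‖g' θ‖₊ : ℝ≥0∞) ^ (2:ℕ) ≠ ⊤ :=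
      ne_top_of_le_ne_top (ENNReal.mul_ne_top ENNReal.ofReal_ne_top hBtop) hfin'
    have wirt := wirtinger_circle g g' hgD hper hmean' hfin
    calc ENNReal.ofReal r⁻¹ * A
        ≤ ENNReal.ofReal r⁻¹ * (ENNReal.ofReal (r ^ 2) * B) :=
          mul_le_mul_right (wirt.trans hfin') _
      _ = ENNReal.ofReal r * B := by
          rw [← mul_assoc, ← ENNReal.ofReal_mul (by positivity),
            show r⁻¹ * r ^ 2 = r by field_simp]

/-- **Hardy inequality in two dimensions for non-radial functions**: if `f ∈ Ḣ¹(ℝ²)` has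
vanishing angular mean over every circle centered at the origin (no `n = 0` angular Fourier
mode), then `‖f/|x|‖_{L²} ≤ ‖∇f‖_{L²}`. -/
theorem hardy_two_dim_nonradial
    (f : Euc 2 → ℂ)
    (hdiff : Differentiable ℝ f)
    (hgrad : MemLp (fun x => fderiv ℝ f x) 2 volume)
    (hmean : ∀ r : ℝ, 0 < r → ∫ θ in (0:ℝ)..(2 * π), f (polar r θ) = 0) :
    eLpNorm (fun x : Euc 2 => (‖x‖⁻¹ : ℝ) • f x) 2 volume ≤
      eLpNorm (fun x => fderiv ℝ f x) 2 volume := by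
  have hfc : Continuous f := hdiff.continuous
  have hΦ₁m : Measurable fun x : Euc 2 => (‖(‖x‖⁻¹ : ℝ) • f x‖₊ : ℝ≥0∞) ^ (2:ℕ) := by
    have h0 : Measurable fun x : Euc 2 => (‖x‖⁻¹ : ℝ) • f x :=
      (measurable_norm.inv).smul hfc.measurable
    exact (h0.nnnorm.coe_nnreal_ennreal).pow_const 2
  have hΦ₂m : Measurable fun x : Euc 2 => (‖fderiv ℝ f x‖₊ : ℝ≥0∞) ^ (2:ℕ) :=
    (((measurable_fderiv ℝ f).nnnorm).coe_nnreal_ennreal).pow_const 2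
  suffices h : ∫⁻ x : Euc 2, (‖(‖x‖⁻¹ : ℝ) • f x‖₊ : ℝ≥0∞) ^ (2:ℕ)
      ≤ ∫⁻ x : Euc 2, (‖fderiv ℝ f x‖₊ : ℝ≥0∞) ^ (2:ℕ) by
    rw [aux_eLpNorm_two_eq, aux_eLpNorm_two_eq]
    exact ENNReal.rpow_le_rpow h (by norm_num)
  rw [lintegral_euc_polar _ hΦ₁m, lintegral_euc_polar _ hΦ₂m]
  refine setLIntegral_mono' measurableSet_Ioi fun r hr => ?_
  exact slice_ineq f hdiff r hr (hmean r hr)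

end
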